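/- arXiv:2102.08237 — 13 statements merged into one kernel-verified Lean document; each statement's English description precedes it below -/
import Mathlib

section
/- Among all vectors d ∈ ℝ^N with d_min ≤ d_i ≤ d_max satisfying the equality constraint αδ Σd_i + βδ² Σd_i² = γ, the sum Σd_i is maximized uniquely at the uniform vector d = (d_0,...,d_0), where d_0 = (-αN + √((αN)² + 4βNγ))/(2βδN), provided d_min ≤ d_0 ≤ d_max. -/
set_option maxHeartbeats 2000000 in
theorem stmt1 (N : ℕ) (hN : 1 ≤ N) (α β δ γ dmin dmax : ℝ)
    (hα : 0 < α) (hβ : 0 < β) (hδ : 0 < δ) (hγ : 0 < γ)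
    (hmin : 0 < dmin) (hminmax : dmin < dmax)
    (d0 : ℝ)
    (hd0 : d0 = (-α * N + Real.sqrt ((α * N)^2 + 4 * β * N * γ)) / (2 * β * δ * N))
    (hlb : dmin ≤ d0) (hub : d0 ≤ dmax) :
    (α * δ * (∑ _i : Fin N, d0) + β * δ^2 * (∑ _i : Fin N, d0^2) = γ ∧
      ∀ i : Fin N, dmin ≤ d0 ∧ d0 ≤ dmax) ∧
    ∀ d : Fin N → ℝ,
      (α * δ * (∑ i, d i) + β * δ^2 * (∑ i, (d i)^2) = γ ∧
        ∀ i, dmin ≤ d i ∧ d i ≤ dmax) →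
      (∑ i, d i) ≤ N * d0 ∧ ((∑ i, d i) = N * d0 → ∀ i, d i = d0) := by
  have hNpos : (0:ℝ) < N := by exact_mod_cast Nat.lt_of_lt_of_le Nat.zero_lt_one hN
  have hNne : (N:ℝ) ≠ 0 := ne_of_gt hNpos
  have hd0pos : 0 < d0 := lt_of_lt_of_le hmin hlb
  -- key identity : α δ (N d0) + β δ² (N d0²) = γ
  set s := Real.sqrt ((α * N)^2 + 4 * β * N * γ) with hs_def
  have hs : s^2 = (α * N)^2 + 4 * β * N * γ := Real.sq_sqrt (by positivity)
  have hd0eq : 2 * β * δ * N * d0 = -α * N + s := by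
    rw [hd0]; field_simp
  have h2 : (2 * β * δ * N * d0 + α * N)^2 = (α*N)^2 + 4*β*N*γ := by
    rw [hd0eq, ← hs]; ring
  have hkey : α * δ * (N * d0) + β * δ^2 * (N * d0^2) = γ := by
    have h3 : (4*β*N) * (α * δ * (N * d0) + β * δ^2 * (N * d0^2)) = (4*β*N) * γ := by
      linear_combination h2
    exact mul_left_cancel₀ (by positivity) h3
  have hsum1 : (∑ _i : Fin N, d0) = N * d0 := by
    simp [Finset.sum_const, mul_comm]
  have hsum2 : (∑ _i : Fin N, d0^2) = N * d0^2 := by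
    simp [Finset.sum_const, mul_comm]
  refine ⟨⟨by rw [hsum1, hsum2]; exact hkey, fun i => ⟨hlb, hub⟩⟩, ?_⟩
  intro d ⟨hcon, hbd⟩
  obtain ⟨S, hS_def⟩ : ∃ S, (∑ i, d i) = S := ⟨_, rfl⟩
  obtain ⟨Q, hQ_def⟩ : ∃ Q, (∑ i, (d i)^2) = Q := ⟨_, rfl⟩
  rw [hS_def, hQ_def] at hcon
  rw [hS_def]
  -- Cauchy-Schwarz : S² ≤ N Q
  have hexp : ∑ i : Fin N, (d i - S/(N:ℝ))^2 = Q - S^2/N := by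
    have h : ∀ i ∈ Finset.univ, (d i - S/(N:ℝ))^2
        = (d i)^2 - (2*S/N) * (d i) + (S/N)^2 := fun i _ => by ring
    rw [Finset.sum_congr rfl h, Finset.sum_add_distrib, Finset.sum_sub_distrib,
      ← Finset.mul_sum, Finset.sum_const, Finset.card_univ, Fintype.card_fin,
      nsmul_eq_mul, hS_def, hQ_def]
    field_simp
    ring
  have hCS : S^2 ≤ N * Q := by
    have h0 : (0:ℝ) ≤ ∑ i : Fin N, (d i - S/(N:ℝ))^2 :=
      Finset.sum_nonneg fun i _ => sq_nonneg _
    rw [hexp] at h0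
    have := (div_le_iff₀ hNpos).mp (by linarith : S^2/N ≤ Q)
    linarith
  have hSpos : 0 < S := by
    have : (N:ℝ) * dmin ≤ S := by
      calc (N:ℝ) * dmin = ∑ _i : Fin N, dmin := by simp [mul_comm]
        _ ≤ ∑ i, d i := Finset.sum_le_sum fun i _ => (hbd i).1
        _ = S := hS_def
    nlinarith
  have hle : S ≤ N * d0 := by
    by_contra h
    push_neg at h
    have h1 : β * δ^2 * Q < β * δ^2 * (N * d0^2) := by
      nlinarith [mul_pos (mul_pos hα hδ) (sub_pos.mpr h)]
    have hbd2 : (0:ℝ) < β * δ^2 := by positivity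
    have hQlt : Q < N * d0^2 := (mul_lt_mul_iff_right₀ hbd2).mp h1
    have hNQ : (N:ℝ) * Q < N * (N * d0^2) := mul_lt_mul_of_pos_left hQlt hNpos
    have hsq : S^2 < (N*d0)^2 := by nlinarith
    have hprod : 0 < (S - N*d0) * (S + N*d0) :=
      mul_pos (sub_pos.mpr h) (by positivity)
    nlinarith [hprod, hsq]
  refine ⟨hle, fun hSeq => ?_⟩
  have hQeq : Q = N * d0^2 := by
    rw [hSeq] at hcon
    have : β * δ^2 * Q = β * δ^2 * (N * d0^2) := by linarith
    exact mul_left_cancel₀ (by positivity) this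
  have hzero : ∑ i : Fin N, (d i - d0)^2 = 0 := by
    have h : ∀ i ∈ Finset.univ, (d i - d0)^2
        = (d i)^2 - (2*d0) * (d i) + d0^2 := fun i _ => by ring
    rw [Finset.sum_congr rfl h, Finset.sum_add_distrib, Finset.sum_sub_distrib,
      ← Finset.mul_sum, Finset.sum_const, Finset.card_univ, Fintype.card_fin,
      nsmul_eq_mul, hS_def, hQ_def, hQeq, hSeq]
    ring
  intro i
  have := (Finset.sum_eq_zero_iff_of_nonneg (fun i _ => sq_nonneg (d i - d0))).mp
    hzero i (Finset.mem_univ i)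
  have := pow_eq_zero_iff (n := 2) (by norm_num) |>.mp this
  linarith [sub_eq_zero.mp this]
end

section
/- Let d̄ be a solution of the problem: minimize Σ_{i=1}^N d_i subject to αδ Σd_i + βδ² Σd_i² = γ and d_min ≤ d_i ≤ d_max. If the feasible set contains a point other than the uniform maximizing vector, then at least one coordinate of d̄ equals d_min or d_max. -/
set_option maxHeartbeats 1000000

lemma key_dec (u0 w0 u R2 : ℝ) (hw0 : 0 < w0) (h01 : w0 < u0) (huu : u0 < u)
    (hu2 : u^2 ≤ R2) (hR : u0^2 + w0^2 = R2) :
    u + Real.sqrt (R2 - u^2) < u0 + w0 := by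
  set w := Real.sqrt (R2 - u^2) with hw
  have hwnn : 0 ≤ w := Real.sqrt_nonneg _
  have hw2 : w^2 = R2 - u^2 := Real.sq_sqrt (by linarith)
  nlinarith [sq_nonneg (w0 - w), sq_nonneg (u - u0), mul_pos (sub_pos.2 huu) (sub_pos.2 h01)]

lemma sum_shift (N : ℕ) (dbar : Fin N → ℝ) (i j : Fin N) (hij : i ≠ j) (x y : ℝ)
    (f : ℝ → ℝ) :
    (∑ k, f ((fun k => if k = i then x else if k = j then y else dbar k) k))
      = (∑ k, f (dbar k)) + (f x - f (dbar i)) + (f y - f (dbar j)) := by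
  have h : ∀ k : Fin N, f ((fun k => if k = i then x else if k = j then y else dbar k) k)
      = f (dbar k) + (if k = i then f x - f (dbar i) else 0)
        + (if k = j then f y - f (dbar j) else 0) := by
    intro k
    by_cases hki : k = i
    · subst hki
      simp [hij]
    · by_cases hkj : k = j
      · subst hkj
        simp [Ne.symm hij, hki]
      · simp [hki, hkj]
  rw [Finset.sum_congr rfl fun k _ => h k]
  rw [Finset.sum_add_distrib, Finset.sum_add_distrib, Finset.sum_ite_eq' Finset.univ,
    Finset.sum_ite_eq' Finset.univ]
  simp

lemma sum_shift' (N : ℕ) (dbar : Fin N → ℝ) (i j : Fin N) (hij : i ≠ j) (x y : ℝ) :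
    (∑ k, (fun k => if k = i then x else if k = j then y else dbar k) k)
      = (∑ k, dbar k) + (x - dbar i) + (y - dbar j) := by
  exact sum_shift N dbar i j hij x y id

lemma sum_shift_sq (N : ℕ) (dbar : Fin N → ℝ) (i j : Fin N) (hij : i ≠ j) (x y : ℝ) :
    (∑ k, ((fun k => if k = i then x else if k = j then y else dbar k) k)^2)
      = (∑ k, (dbar k)^2) + (x^2 - (dbar i)^2) + (y^2 - (dbar j)^2) := by
  exact sum_shift N dbar i j hij x y (fun t => t^2)

lemma aux_perturb (N : ℕ) (α β δ γ dmin dmax : ℝ)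
    (hα : 0 < α) (hβ : 0 < β) (hδ : 0 < δ) (hmin : 0 < dmin)
    (dbar : Fin N → ℝ)
    (hcon : α * δ * (∑ k, dbar k) + β * δ^2 * (∑ k, (dbar k)^2) = γ)
    (hbox : ∀ k, dmin < dbar k ∧ dbar k < dmax)
    (i j : Fin N) (hij : dbar j < dbar i) :
    ∃ d : Fin N → ℝ,
      (α * δ * (∑ k, d k) + β * δ^2 * (∑ k, (d k)^2) = γ ∧
        ∀ k, dmin ≤ d k ∧ d k ≤ dmax)
      ∧ (∑ k, d k) < ∑ k, dbar k := by
  have hijne : i ≠ j := fun h => by rw [h] at hij; exact lt_irrefl _ hij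
  obtain ⟨a, ha⟩ : ∃ t, t = dbar i := ⟨_, rfl⟩
  obtain ⟨b, hb⟩ : ∃ t, t = dbar j := ⟨_, rfl⟩
  have hbmin : dmin < b := by rw [hb]; exact (hbox j).1
  have hamax : a < dmax := by rw [ha]; exact (hbox i).2
  have hba : b < a := by rw [ha, hb]; exact hij
  obtain ⟨c, hc⟩ : ∃ t : ℝ, t = -α / (2 * β * δ) := ⟨_, rfl⟩
  have hcneg : c < 0 := by
    have h2 : (0:ℝ) < 2 * β * δ := by positivity
    rw [hc]
    exact div_neg_of_neg_of_pos (by linarith) h2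
  have hcα : α * δ = -2 * β * δ^2 * c := by
    rw [hc]; field_simp
  obtain ⟨R2, hR2⟩ : ∃ t : ℝ, t = (a - c)^2 + (b - c)^2 := ⟨_, rfl⟩
  have hbc : 0 < b - c := by linarith
  have hac0 : 0 < a - c := by linarith
  have hac : b - c < a - c := by linarith
  have hdminc : 0 < dmin - c := by linarith
  have hdminb : dmin - c < b - c := by linarith
  have hsq1 : (dmin - c)^2 < (b - c)^2 :=
    pow_lt_pow_left₀ hdminb (le_of_lt hdminc) two_ne_zero
  obtain ⟨M, hM⟩ : ∃ t : ℝ, t = Real.sqrt (R2 - (dmin - c)^2) := ⟨_, rfl⟩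
  have hMarg : 0 ≤ R2 - (dmin - c)^2 := by
    rw [hR2]; have := sq_nonneg (a - c); linarith
  have hM2 : M^2 = R2 - (dmin - c)^2 := by rw [hM]; exact Real.sq_sqrt hMarg
  have hMnn : 0 ≤ M := by rw [hM]; exact Real.sqrt_nonneg _
  have haM : a - c < M := by
    have h1 : (a - c)^2 < M^2 := by rw [hM2, hR2]; linarith
    exact lt_of_pow_lt_pow_left₀ 2 hMnn h1
  obtain ⟨s, hs⟩ : ∃ t : ℝ, t = min (dmax - a) (M - (a - c)) / 2 := ⟨_, rfl⟩
  have hminlt : 0 < min (dmax - a) (M - (a - c)) :=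
    lt_min (by linarith) (by linarith)
  have hspos : 0 < s := by rw [hs]; linarith
  have hs1 : s < dmax - a := by
    rw [hs]; have := min_le_left (dmax - a) (M - (a - c)); linarith
  have hs2 : s < M - (a - c) := by
    rw [hs]; have := min_le_right (dmax - a) (M - (a - c)); linarith
  obtain ⟨x, hx⟩ : ∃ t : ℝ, t = a + s := ⟨_, rfl⟩
  have hxmax : x ≤ dmax := by rw [hx]; linarith
  have hxM : x - c < M := by rw [hx]; linarith
  have hxc : 0 < x - c := by rw [hx]; linarith
  have hax : a - c < x - c := by rw [hx]; linarith
  have hx2 : (x - c)^2 < R2 - (dmin - c)^2 := by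
    have h1 : (x - c)^2 < M^2 := pow_lt_pow_left₀ hxM (le_of_lt hxc) two_ne_zero
    linarith [hM2]
  have hyarg : 0 ≤ R2 - (x - c)^2 := by
    have := sq_nonneg (dmin - c); linarith
  obtain ⟨y, hy⟩ : ∃ t : ℝ, t = c + Real.sqrt (R2 - (x - c)^2) := ⟨_, rfl⟩
  have hy2 : (y - c)^2 = R2 - (x - c)^2 := by
    rw [hy, add_sub_cancel_left]; exact Real.sq_sqrt hyarg
  have hymin : dmin ≤ y := by
    have h1 : dmin - c ≤ Real.sqrt (R2 - (x - c)^2) := by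
      rw [← Real.sqrt_sq (le_of_lt hdminc)]
      exact Real.sqrt_le_sqrt (by linarith)
    rw [hy]; linarith
  have hyb : y < b := by
    have hxa2 : (a - c)^2 < (x - c)^2 := pow_lt_pow_left₀ hax (le_of_lt hac0) two_ne_zero
    have h1 : Real.sqrt (R2 - (x - c)^2) < b - c := by
      rw [← Real.sqrt_sq (le_of_lt hbc)]
      exact Real.sqrt_lt_sqrt hyarg (by rw [hR2]; linarith)
    rw [hy]; linarith
  have hsum_lt : x + y < a + b := by
    have hkey := key_dec (a - c) (b - c) (x - c) R2 hbc hac hax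
      (by linarith [sq_nonneg (dmin - c)]) hR2.symm
    rw [hy]; linarith
  refine ⟨fun k => if k = i then x else if k = j then y else dbar k, ⟨?_, ?_⟩, ?_⟩
  · rw [sum_shift' N dbar i j hijne x y, sum_shift_sq N dbar i j hijne x y]
    rw [← ha, ← hb]
    have hcirc : (x - c)^2 + (y - c)^2 = (a - c)^2 + (b - c)^2 := by
      rw [hy2, hR2]; ring
    linear_combination hcon + β * δ^2 * hcirc + (x + y - a - b) * hcα
  · intro k
    have hdk : (fun k => if k = i then x else if k = j then y else dbar k) k
        = if k = i then x else if k = j then y else dbar k := rfl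
    rw [hdk]
    by_cases hki : k = i
    · rw [if_pos hki]
      have h := (hbox i).1
      rw [← ha] at h
      exact ⟨by rw [hx]; linarith, hxmax⟩
    · rw [if_neg hki]
      by_cases hkj : k = j
      · rw [if_pos hkj]
        have h := (hbox j).2
        rw [← hb] at h
        exact ⟨hymin, by linarith⟩
      · rw [if_neg hkj]
        exact ⟨le_of_lt (hbox k).1, le_of_lt (hbox k).2⟩
  · rw [sum_shift' N dbar i j hijne x y, ← ha, ← hb]
    linarith

lemma d0_facts (N : ℕ) (hN : 1 ≤ N) (α β δ γ : ℝ)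
    (hα : 0 < α) (hβ : 0 < β) (hδ : 0 < δ) (hγ : 0 < γ) (d0 : ℝ)
    (hd0 : d0 = (-α * N + Real.sqrt ((α * N)^2 + 4 * β * N * γ)) / (2 * β * δ * N)) :
    0 < d0 ∧ α * δ * (N * d0) + β * δ^2 * (N * d0^2) = γ := by
  have hNpos : (0:ℝ) < N := by exact_mod_cast hN
  set D := Real.sqrt ((α * N)^2 + 4 * β * N * γ) with hD
  have hD2 : D^2 = (α * N)^2 + 4 * β * N * γ := Real.sq_sqrt (by positivity)
  have hDnn : 0 ≤ D := Real.sqrt_nonneg _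
  have hDgt : α * N < D := by nlinarith [mul_pos hα hNpos, mul_pos (mul_pos hβ hNpos) hγ]
  have h1 : d0 * (2 * β * δ * N) = -α * N + D := by
    rw [hd0]; field_simp
  constructor
  · nlinarith [mul_pos (mul_pos (mul_pos two_pos hβ) hδ) hNpos]
  · have h2 : 4*β*(N:ℝ)*(α * δ * (N * d0) + β * δ^2 * (N * d0^2)) = 4*β*(N:ℝ)*γ := by
      linear_combination (2*β*δ*(N:ℝ)*d0 + α*N + D) * h1 + hD2
    exact mul_left_cancel₀ (by positivity) h2

theorem stmt3 (N : ℕ) (hN : 1 ≤ N) (α β δ γ dmin dmax : ℝ)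
    (hα : 0 < α) (hβ : 0 < β) (hδ : 0 < δ) (hγ : 0 < γ)
    (hmin : 0 < dmin) (hminmax : dmin < dmax)
    (K : Set (Fin N → ℝ))
    (hK : K = {d | α * δ * (∑ i, d i) + β * δ^2 * (∑ i, (d i)^2) = γ ∧
      ∀ i, dmin ≤ d i ∧ d i ≤ dmax})
    (d0 : ℝ)
    (hd0 : d0 = (-α * N + Real.sqrt ((α * N)^2 + 4 * β * N * γ)) / (2 * β * δ * N))
    (hne : ∃ d ∈ K, d ≠ fun _ => d0)
    (dbar : Fin N → ℝ) (hdbarK : dbar ∈ K)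
    (hmin' : ∀ d ∈ K, (∑ i, dbar i) ≤ ∑ i, d i) :
    ∃ i, dbar i = dmin ∨ dbar i = dmax := by
  subst hK
  obtain ⟨hcon, hbox⟩ := hdbarK
  by_contra hcontra
  push_neg at hcontra
  have hint : ∀ i, dmin < dbar i ∧ dbar i < dmax := by
    intro i
    obtain ⟨h1, h2⟩ := hbox i
    obtain ⟨h3, h4⟩ := hcontra i
    exact ⟨lt_of_le_of_ne h1 (Ne.symm h3), lt_of_le_of_ne h2 h4⟩
  obtain ⟨hd0pos, hd0eq⟩ := d0_facts N hN α β δ γ hα hβ hδ hγ d0 hd0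
  by_cases hall : ∀ i j, dbar i = dbar j
  · -- all coordinates equal; then dbar = const d0, use hne for contradiction
    obtain ⟨d, hdK, hdne⟩ := hne
    obtain ⟨hdcon, hdbox⟩ := hdK
    have hNpos : (0:ℝ) < N := by exact_mod_cast hN
    set i0 : Fin N := ⟨0, hN⟩ with hi0
    have hvd : ∀ i, dbar i = dbar i0 := fun i => hall i i0
    have hsum : ∑ i, dbar i = N * dbar i0 := by
      rw [Finset.sum_congr rfl fun i _ => hvd i]
      simp [Finset.sum_const, Finset.card_univ, mul_comm]
    have hsq : ∑ i, (dbar i)^2 = N * (dbar i0)^2 := by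
      rw [Finset.sum_congr rfl fun i _ => by rw [hvd i]]
      simp [Finset.sum_const, Finset.card_univ, mul_comm]
    have hv : α * δ * (N * dbar i0) + β * δ^2 * (N * (dbar i0)^2) = γ := by
      rw [← hsum, ← hsq]; exact hcon
    have hvpos : 0 < dbar i0 := lt_trans hmin (hint i0).1
    have hveq : dbar i0 = d0 := by
      have hfac : (dbar i0 - d0) * (α * δ * N + β * δ^2 * N * (dbar i0 + d0)) = 0 := by
        linear_combination hv - hd0eq
      have hpos : 0 < α * δ * N + β * δ^2 * N * (dbar i0 + d0) := by positivity
      have := mul_eq_zero.1 hfac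
      rcases this with h | h
      · linarith [sub_eq_zero.1 h]
      · linarith
    -- minimality gives ∑ d ≥ N * d0, but constraint forces ∑ d ≤ N * d0 with equality iff const
    have hmind : (N : ℝ) * d0 ≤ ∑ i, d i := by
      have := hmin' d ⟨hdcon, hdbox⟩
      rw [hsum, hveq] at this
      exact this
    have hsplit : ∑ i, (d i - d0)^2
        = (∑ i, (d i)^2) - 2*d0*(∑ i, d i) + N*d0^2 := by
      have h : ∀ i : Fin N, (d i - d0)^2 = (d i)^2 - 2*d0*(d i) + d0^2 := by
        intro i; ring
      rw [Finset.sum_congr rfl fun i _ => h i, Finset.sum_add_distrib,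
        Finset.sum_sub_distrib, ← Finset.mul_sum, Finset.sum_const,
        Finset.card_univ, Fintype.card_fin, nsmul_eq_mul]
    have hexp : β * δ^2 * (∑ i, (d i - d0)^2)
        = δ * ((N:ℝ)*d0 - ∑ i, d i) * (α + 2*β*δ*d0) := by
      linear_combination β * δ^2 * hsplit + hdcon - hd0eq
    have hRHS : δ * ((N:ℝ)*d0 - ∑ i, d i) * (α + 2*β*δ*d0) ≤ 0 := by
      have h1 : (N:ℝ)*d0 - ∑ i, d i ≤ 0 := by linarith
      have h2 : 0 < α + 2*β*δ*d0 := by positivity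
      have := mul_nonpos_of_nonpos_of_nonneg (mul_nonpos_of_nonneg_of_nonpos (le_of_lt hδ) h1) (le_of_lt h2)
      nlinarith
    have hsos_nonneg : 0 ≤ ∑ i, (d i - d0)^2 :=
      Finset.sum_nonneg fun i _ => sq_nonneg _
    have hzero : ∑ i, (d i - d0)^2 = 0 := by
      by_contra hz
      have hpos' : 0 < ∑ i, (d i - d0)^2 := lt_of_le_of_ne hsos_nonneg (Ne.symm hz)
      have hbd : 0 < β * δ^2 := by positivity
      nlinarith [mul_pos hbd hpos']
    have hall0 : ∀ i ∈ Finset.univ, (d i - d0)^2 = 0 :=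
      (Finset.sum_eq_zero_iff_of_nonneg fun i _ => sq_nonneg _).1 hzero
    apply hdne
    funext i
    have := hall0 i (Finset.mem_univ i)
    have := pow_eq_zero_iff (n := 2) (by norm_num) |>.1 this
    linarith [sub_eq_zero.1 this]
  · -- two distinct coordinates: perturb to decrease the sum
    push_neg at hall
    obtain ⟨i, j, hij⟩ := hall
    rcases lt_or_gt_of_ne hij with h | h
    · obtain ⟨d, hdK, hdlt⟩ := aux_perturb N α β δ γ dmin dmax hα hβ hδ hmin dbar hcon hint j i h
      exact absurd (hmin' d hdK) (not_le.2 hdlt)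
    · obtain ⟨d, hdK, hdlt⟩ := aux_perturb N α β δ γ dmin dmax hα hβ hδ hmin dbar hcon hint i j h
      exact absurd (hmin' d hdK) (not_le.2 hdlt)
end

section
/- Suppose d̄ = (d_min,...,d_min, d*, d_max,...,d_max) with K copies of d_min and N-K-1 copies of d_max satisfies αδ Σd̄_i + βδ² Σd̄_i² = γ and d_min < d* < d_max. Then K = ⌊(N·φ(d_max) - γ)/(φ(d_max) - φ(d_min))⌋, where φ(r) = αδr + βδ²r². -/
theorem stmt5 (N K : ℕ) (hKN : K + 1 ≤ N) (α β δ γ dmin dmax dstar : ℝ)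
    (hα : 0 < α) (hβ : 0 < β) (hδ : 0 < δ) (hγ : 0 < γ)
    (hmin : 0 < dmin) (hminmax : dmin < dmax)
    (φ : ℝ → ℝ) (hφ : φ = fun r => α * δ * r + β * δ^2 * r^2)
    (hstar : dmin < dstar ∧ dstar < dmax)
    (hcon : K * φ dmin + φ dstar + (N - K - 1 : ℝ) * φ dmax = γ) :
    (K : ℤ) = ⌊(N * φ dmax - γ) / (φ dmax - φ dmin)⌋ := by
  obtain ⟨hs1, hs2⟩ := hstar
  have h1 : φ dmin < φ dstar := by
    subst hφ; simp only
    nlinarith [mul_pos (mul_pos hα hδ) (sub_pos.mpr hs1),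
      mul_pos (mul_pos (mul_pos hβ (pow_pos hδ 2))
        (show (0:ℝ) < dstar + dmin by linarith)) (sub_pos.mpr hs1)]
  have h2 : φ dstar < φ dmax := by
    subst hφ; simp only
    nlinarith [mul_pos (mul_pos hα hδ) (sub_pos.mpr hs2),
      mul_pos (mul_pos (mul_pos hβ (pow_pos hδ 2))
        (show (0:ℝ) < dmax + dstar by linarith)) (sub_pos.mpr hs2)]
  have hD : 0 < φ dmax - φ dmin := by linarith
  have hx : (N * φ dmax - γ) / (φ dmax - φ dmin)
      = K + (φ dmax - φ dstar) / (φ dmax - φ dmin) := by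
    field_simp
    linarith
  symm
  rw [Int.floor_eq_iff, hx]
  constructor
  · have : 0 ≤ (φ dmax - φ dstar) / (φ dmax - φ dmin) :=
      div_nonneg (by linarith) (by linarith)
    push_cast; linarith
  · have : (φ dmax - φ dstar) / (φ dmax - φ dmin) < 1 := by
      rw [div_lt_one hD]; linarith
    push_cast; linarith
end

section
/- The function ψ(N) = (-αN + √((αN)² + 4βNγ))/(2βδ) is strictly increasing in N > 0, where α, β, δ, γ > 0. -/
theorem stmt7 (α β δ γ : ℝ)
    (hα : 0 < α) (hβ : 0 < β) (hδ : 0 < δ) (hγ : 0 < γ) :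
    StrictMonoOn
      (fun N : ℝ => (-α * N + Real.sqrt ((α * N)^2 + 4 * β * N * γ)) / (2 * β * δ))
      (Set.Ioi (0 : ℝ)) := by
  intro a ha b hb hab
  simp only [Set.mem_Ioi] at ha hb
  have h2 : (0:ℝ) < 2 * β * δ := by positivity
  simp only []
  rw [div_lt_div_iff_of_pos_right h2]
  set Sa := Real.sqrt ((α * a)^2 + 4 * β * a * γ) with hSa
  set Sb := Real.sqrt ((α * b)^2 + 4 * β * b * γ) with hSb
  have hXa : (0:ℝ) ≤ (α * a)^2 + 4 * β * a * γ := by positivity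
  have hXb : (0:ℝ) ≤ (α * b)^2 + 4 * β * b * γ := by positivity
  have hSa2 : Sa^2 = (α * a)^2 + 4 * β * a * γ := Real.sq_sqrt hXa
  have hSb2 : Sb^2 = (α * b)^2 + 4 * β * b * γ := Real.sq_sqrt hXb
  have hSann : 0 ≤ Sa := Real.sqrt_nonneg _
  have hSbnn : 0 ≤ Sb := Real.sqrt_nonneg _
  have hpa : 0 < Sa + α * a := by nlinarith
  have hpb : 0 < Sb + α * b := by nlinarith
  have key : a * Sb < b * Sa := by
    have h1 : a * Sb = Real.sqrt (a^2 * ((α * b)^2 + 4 * β * b * γ)) := by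
      rw [Real.sqrt_mul (sq_nonneg a), Real.sqrt_sq ha.le]
    have h2' : b * Sa = Real.sqrt (b^2 * ((α * a)^2 + 4 * β * a * γ)) := by
      rw [Real.sqrt_mul (sq_nonneg b), Real.sqrt_sq hb.le]
    rw [h1, h2']
    apply Real.sqrt_lt_sqrt (by positivity)
    nlinarith [mul_pos (mul_pos (mul_pos hβ hγ) (mul_pos ha hb)) (sub_pos.mpr hab)]
  have hk : 4 * β * γ * (a * Sb) < 4 * β * γ * (b * Sa) := by
    apply mul_lt_mul_of_pos_left key (by positivity)
  nlinarith [mul_pos hpa hpb, hk, hSa2, hSb2]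
end

section
/- Let N_1 < N_2 be positive integers, d_max > 0, and let d̄_0 = (-αN_2 + √((αN_2)² + 4βN_2γ))/(2βδN_2) satisfy N_1(αδ d_max + βδ² d_max²) ≤ γ = N_2(αδ d̄_0 + βδ² d̄_0²). Then the linear function H(x) = N_2(x·d̄_0 + d̄_0²) - N_1(x·d_max + d_max²) satisfies H(α/(βδ)) ≥ 0 and H'(x) = N_2·d̄_0 - N_1·d_max > 0; consequently, if α_T/β_T > α/(βδ) then N_2(α_T d̄_0 + β_T d̄_0²) > N_1(α_T d_max + β_T d_max²). -/
theorem stmt8 (N₁ N₂ : ℕ) (hN₁ : 0 < N₁) (hlt : N₁ < N₂)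
    (α β δ γ αT βT dmax : ℝ)
    (hα : 0 < α) (hβ : 0 < β) (hδ : 0 < δ) (hγ : 0 < γ)
    (hαT : 0 < αT) (hβT : 0 < βT) (hdmax : 0 < dmax)
    (d0 : ℝ)
    (hd0 : d0 = (-α * N₂ + Real.sqrt ((α * N₂)^2 + 4 * β * N₂ * γ)) / (2 * β * δ * N₂))
    (hadm : N₁ * (α * δ * dmax + β * δ^2 * dmax^2) ≤ γ)
    (hsat : γ = N₂ * (α * δ * d0 + β * δ^2 * d0^2)) :
    (0 ≤ N₂ * (α / (β * δ) * d0 + d0^2) - N₁ * (α / (β * δ) * dmax + dmax^2)) ∧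
    (0 < N₂ * d0 - N₁ * dmax) ∧
    (αT / βT > α / (β * δ) →
      N₁ * (αT * dmax + βT * dmax^2) < N₂ * (αT * d0 + βT * d0^2)) := by
  have hN2 : (0:ℝ) < N₂ := by exact_mod_cast hN₁.trans hlt
  have hN1 : (0:ℝ) < N₁ := by exact_mod_cast hN₁
  have hlt' : (N₁:ℝ) < N₂ := by exact_mod_cast hlt
  have hd0pos : 0 < d0 := by
    rw [hd0]
    apply div_pos _ (by positivity)
    have hsq : α * N₂ < Real.sqrt ((α * N₂)^2 + 4 * β * N₂ * γ) := by
      have h := Real.sqrt_lt_sqrt (sq_nonneg (α * N₂))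
        (show (α * N₂)^2 < (α * N₂)^2 + 4 * β * N₂ * γ by
          nlinarith [mul_pos (mul_pos hβ hN2) hγ])
      rwa [Real.sqrt_sq (by positivity)] at h
    linarith
  have key : (N₁:ℝ) * (α * δ * dmax + β * δ^2 * dmax^2) ≤
      N₂ * (α * δ * d0 + β * δ^2 * d0^2) := hsat ▸ hadm
  have hbd : (0:ℝ) < β * δ := by positivity
  have h1 : 0 ≤ N₂ * (α / (β * δ) * d0 + d0^2) - N₁ * (α / (β * δ) * dmax + dmax^2) := by
    have heq : N₂ * (α / (β * δ) * d0 + d0^2) - N₁ * (α / (β * δ) * dmax + dmax^2) =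
        (N₂ * (α * δ * d0 + β * δ^2 * d0^2) - N₁ * (α * δ * dmax + β * δ^2 * dmax^2)) / (β * δ^2) := by
      field_simp
    rw [heq]
    apply div_nonneg _ (by positivity)
    linarith
  have hc : 0 < α / (β * δ) := by positivity
  have h2 : 0 < N₂ * d0 - N₁ * dmax := by
    by_contra h
    push_neg at h
    have hle : (N₂:ℝ) * d0 ≤ N₁ * dmax := by linarith
    have hd0lt : d0 < dmax := by nlinarith
    nlinarith [mul_le_mul_of_nonneg_right hle hd0pos.le,
      mul_le_mul_of_nonneg_left hle hc.le, mul_pos hN1 hdmax]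
  refine ⟨h1, h2, fun ht => ?_⟩
  have htβ : α / (β * δ) * βT < αT := (lt_div_iff₀ hβT).mp ht
  have hpos : 0 < αT - βT * (α / (β * δ)) := by linarith [htβ]
  have hid : (N₂:ℝ) * (αT * d0 + βT * d0^2) - N₁ * (αT * dmax + βT * dmax^2) =
      βT * (N₂ * (α / (β * δ) * d0 + d0^2) - N₁ * (α / (β * δ) * dmax + dmax^2)) +
      (αT - βT * (α / (β * δ))) * (N₂ * d0 - N₁ * dmax) := by ring
  linarith [hid, mul_nonneg hβT.le h1, mul_pos hpos h2]
end

section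
/- Assume 0 < d_min, ρ_0 := γ/φ(d_min) ≥ 2 with φ(r) = αδr + βδ²r², λ_0 := max{1, γ/φ(d_max)}, ⌊λ_0⌋ < ⌊ρ_0⌋, and α_T/β_T > α/(βδ). Then the problem of maximizing E_T(N,d) = α_T Σ_{i=1}^N d_i + β_T Σ_{i=1}^N d_i² over N ∈ ℕ and d ∈ ℝ^N subject to αδ Σd_i + βδ² Σd_i² ≤ γ and d_min ≤ d_i ≤ d_max has the unique solution N̄ = ⌊ρ_0⌋ and d̄ = (d̄_0,...,d̄_0) with d̄_0 = (-αN̄ + √((αN̄)² + 4βN̄γ))/(2βδN̄). -/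
/-!
Write `a = αδ`, `b = βδ²`, `S₁ = ∑ dᵢ`, `S₂ = ∑ dᵢ²`. Then
`b · (α_T S₁ + β_T S₂) = β_T (a S₁ + b S₂) + (α_T b - β_T a) S₁`, and `α_T b - β_T a > 0` is the
condition `ω_δ > 0`; so the tumour effect is increasing both in the OAR load `a S₁ + b S₂ ≤ γ` and
in the total dose `S₁`. Each dose is at least `d_min`, so `N ≤ ⌊ρ₀⌋ = N̄`, and Cauchy–Schwarz
`S₁² ≤ N S₂ ≤ N̄ S₂` turns the OAR constraint into `N̄ a S₁ + b S₁² ≤ N̄ γ`, whence `S₁ ≤ N̄ d̄₀`.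
Equality forces equality in Cauchy–Schwarz with `N = N̄`, i.e. constant doses `d̄₀`.
-/

open Finset

lemma strictMonoOn_mul_add_mul_sq {a b : ℝ} (ha : 0 ≤ a) (hb : 0 < b) :
    StrictMonoOn (fun x => a * x + b * x ^ 2) (Set.Ici 0) := by
  intro x hx y hy hxy
  simp only [Set.mem_Ici] at hx hy
  nlinarith [mul_pos hb (mul_pos (sub_pos.mpr hxy) (by linarith : 0 < x + y))]

lemma objective_le_of_constraint {a b αT βT γ s₁ s₂ t₁ t₂ : ℝ} (hb : 0 < b) (hβT : 0 ≤ βT)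
    (hω : βT * a < αT * b) (hs : a * s₁ + b * s₂ ≤ γ) (ht : a * t₁ + b * t₂ = γ) (h₁ : s₁ ≤ t₁) :
    αT * s₁ + βT * s₂ ≤ αT * t₁ + βT * t₂ ∧
      (αT * s₁ + βT * s₂ = αT * t₁ + βT * t₂ → s₁ = t₁) := by
  have key : b * ((αT * t₁ + βT * t₂) - (αT * s₁ + βT * s₂))
      = βT * (γ - (a * s₁ + b * s₂)) + (αT * b - βT * a) * (t₁ - s₁) := by
    linear_combination βT * ht
  have h₁' : 0 ≤ βT * (γ - (a * s₁ + b * s₂)) := mul_nonneg hβT (by linarith)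
  have h₂' : 0 ≤ (αT * b - βT * a) * (t₁ - s₁) := mul_nonneg (by linarith) (by linarith)
  refine ⟨?_, fun heq => ?_⟩
  · nlinarith
  · rw [heq, sub_self, mul_zero] at key
    have : (αT * b - βT * a) * (t₁ - s₁) = 0 := by linarith
    rcases mul_eq_zero.mp this with h | h <;> linarith

lemma quadratic_root_pos_and_eq {α β δ γ M d₀ : ℝ} (hβ : 0 < β) (hδ : 0 < δ) (hγ : 0 < γ)
    (hM : 0 < M) (hd₀ : d₀ = (-α * M + √((α * M) ^ 2 + 4 * β * M * γ)) / (2 * β * δ * M)) :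
    0 < d₀ ∧ M * (α * δ * d₀ + β * δ ^ 2 * d₀ ^ 2) = γ := by
  set D := √((α * M) ^ 2 + 4 * β * M * γ)
  have hD : D ^ 2 = (α * M) ^ 2 + 4 * β * M * γ := Real.sq_sqrt (by positivity)
  have hαD : α * M < D := Real.lt_sqrt_of_sq_lt (by nlinarith [mul_pos (mul_pos hβ hM) hγ])
  have hd₀' : 2 * β * δ * M * d₀ = -α * M + D := by
    rw [hd₀]; field_simp
  refine ⟨hd₀ ▸ div_pos (by linarith) (by positivity), ?_⟩
  have h4βM : 4 * β * M ≠ 0 := by positivity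
  apply mul_left_cancel₀ h4βM
  linear_combination (2 * β * δ * M * d₀ + α * M + D) * hd₀' + hD

lemma mem_Icc_of_mul_eq {f : ℝ → ℝ} {M γ m₁ m₂ x : ℝ} (hf : StrictMonoOn f (Set.Ici 0))
    (hM : 0 < M) (hm₁ : 0 ≤ m₁) (hm₂ : 0 ≤ m₂) (hx : 0 ≤ x) (h₁ : M * f m₁ ≤ γ)
    (h₂ : γ ≤ M * f m₂) (hγ : M * f x = γ) : x ∈ Set.Icc m₁ m₂ :=
  ⟨(hf.le_iff_le hm₁ hx).mp (le_of_mul_le_mul_left (h₁.trans hγ.ge) hM),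
    (hf.le_iff_le hx hm₂).mp (le_of_mul_le_mul_left (hγ.trans_le h₂) hM)⟩

section Protocols

variable {ι : Type*} [Fintype ι] {a b γ : ℝ} {d : ι → ℝ}

lemma card_mul_le_of_sum_add_sum_sq_le {m : ℝ} (ha : 0 ≤ a) (hb : 0 ≤ b) (hm : 0 ≤ m)
    (hd : ∀ i, m ≤ d i) (hcon : a * ∑ i, d i + b * ∑ i, d i ^ 2 ≤ γ) :
    Fintype.card ι * (a * m + b * m ^ 2) ≤ γ :=
  calc Fintype.card ι * (a * m + b * m ^ 2) = ∑ _i : ι, (a * m + b * m ^ 2) := by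
        rw [sum_const, card_univ, nsmul_eq_mul]
    _ ≤ ∑ i, (a * d i + b * d i ^ 2) := by
        gcongr with i
        · exact hd i
        · exact hd i
    _ = a * ∑ i, d i + b * ∑ i, d i ^ 2 := by rw [sum_add_distrib, mul_sum, mul_sum]
    _ ≤ γ := hcon

lemma sq_sum_le_mul_sum_sq {M : ℕ} (hM : Fintype.card ι ≤ M) :
    (∑ i, d i) ^ 2 ≤ M * ∑ i, d i ^ 2 :=
  calc (∑ i, d i) ^ 2 ≤ Fintype.card ι * ∑ i, d i ^ 2 := sq_sum_le_card_mul_sum_sq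
    _ ≤ M * ∑ i, d i ^ 2 := by gcongr

lemma sum_le_of_sum_add_sum_sq_le {M : ℕ} {x : ℝ} (ha : 0 ≤ a) (hb : 0 < b)
    (hM : Fintype.card ι ≤ M) (hx : 0 ≤ x) (hcon : a * ∑ i, d i + b * ∑ i, d i ^ 2 ≤ γ)
    (hγ : M * (a * x + b * x ^ 2) = γ) : ∑ i, d i ≤ M * x := by
  rcases le_total (∑ i, d i) 0 with hS | hS
  · exact hS.trans (by positivity)
  have hCS := sq_sum_le_mul_sum_sq (d := d) hM
  refine ((strictMonoOn_mul_add_mul_sq (mul_nonneg (Nat.cast_nonneg M) ha) hb).le_iff_le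
    hS (by positivity : (0 : ℝ) ≤ M * x)).mp ?_
  calc M * a * ∑ i, d i + b * (∑ i, d i) ^ 2 ≤ M * (a * ∑ i, d i + b * ∑ i, d i ^ 2) := by
        linarith [mul_le_mul_of_nonneg_left hCS hb.le]
    _ ≤ M * γ := by gcongr
    _ = M * a * (M * x) + b * (M * x) ^ 2 := by rw [← hγ]; ring

lemma card_eq_and_eq_of_sum_eq {M : ℕ} {x : ℝ} (hb : 0 < b) (hM₀ : 0 < M) (hx : x ≠ 0)
    (hM : Fintype.card ι ≤ M) (hcon : a * ∑ i, d i + b * ∑ i, d i ^ 2 ≤ γ)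
    (hγ : M * (a * x + b * x ^ 2) = γ) (hS : ∑ i, d i = M * x) :
    Fintype.card ι = M ∧ ∀ i, d i = x := by
  have hMx : (0 : ℝ) < M * x ^ 2 := by positivity
  have hS₂ : ∑ i, d i ^ 2 ≤ M * x ^ 2 := by
    rw [hS] at hcon
    nlinarith
  have hCS := sq_sum_le_card_mul_sum_sq (s := univ) (f := d)
  rw [hS, card_univ] at hCS
  have hcard : (M : ℝ) ≤ Fintype.card ι := by
    refine le_of_mul_le_mul_right ?_ hMx
    calc (M : ℝ) * (M * x ^ 2) = (M * x) ^ 2 := by ring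
      _ ≤ Fintype.card ι * ∑ i, d i ^ 2 := hCS
      _ ≤ Fintype.card ι * (M * x ^ 2) := by gcongr
  have hcard' : Fintype.card ι = M := le_antisymm hM (by exact_mod_cast hcard)
  refine ⟨hcard', fun i => ?_⟩
  have hvar : ∑ j, (d j - x) ^ 2 = 0 := by
    have hexp : ∑ j, (d j - x) ^ 2 = ∑ j, d j ^ 2 - 2 * x * ∑ j, d j + M * x ^ 2 := by
      have hsq : ∀ j, (d j - x) ^ 2 = d j ^ 2 - 2 * x * d j + x ^ 2 := fun j => by ring
      simp only [hsq, sum_add_distrib, sum_sub_distrib, ← mul_sum, sum_const, card_univ, hcard',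
        nsmul_eq_mul]
    refine le_antisymm ?_ (sum_nonneg fun j _ => sq_nonneg _)
    rw [hexp, hS]
    linarith
  have := (sum_eq_zero_iff_of_nonneg fun j _ => sq_nonneg (d j - x)).mp hvar i (mem_univ i)
  exact sub_eq_zero.mp (pow_eq_zero_iff two_ne_zero |>.mp this)

end Protocols

theorem stmt9_general (αT βT α β δ γ dmin dmax : ℝ)
    (hβT : 0 < βT) (hα : 0 < α) (hβ : 0 < β)
    (hδ : 0 < δ) (hγ : 0 < γ)
    (hmin : 0 < dmin) (hminmax : dmin < dmax)
    (φ : ℝ → ℝ) (hφ : φ = fun r => α * δ * r + β * δ^2 * r^2)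
    (ρ₀ lam₀ : ℝ) (hρ₀ : ρ₀ = γ / φ dmin) (hlam₀ : lam₀ = max 1 (γ / φ dmax))
    (hfl : ⌊lam₀⌋₊ < ⌊ρ₀⌋₊)
    (hω : αT / βT > α / (β * δ))
    (Nbar : ℕ) (hNbar : Nbar = ⌊ρ₀⌋₊)
    (d0 : ℝ)
    (hd0 : d0 = (-α * Nbar + Real.sqrt ((α * Nbar)^2 + 4 * β * Nbar * γ)) / (2 * β * δ * Nbar)) :
    (α * δ * (∑ _i : Fin Nbar, d0) + β * δ^2 * (∑ _i : Fin Nbar, d0^2) ≤ γ ∧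
      dmin ≤ d0 ∧ d0 ≤ dmax) ∧
    ∀ (N : ℕ) (d : Fin N → ℝ),
      (α * δ * (∑ i, d i) + β * δ^2 * (∑ i, (d i)^2) ≤ γ ∧
        ∀ i, dmin ≤ d i ∧ d i ≤ dmax) →
      (αT * (∑ i, d i) + βT * (∑ i, (d i)^2)
          ≤ αT * (∑ _i : Fin Nbar, d0) + βT * (∑ _i : Fin Nbar, d0^2)) ∧
      (αT * (∑ i, d i) + βT * (∑ i, (d i)^2)
          = αT * (∑ _i : Fin Nbar, d0) + βT * (∑ _i : Fin Nbar, d0^2) →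
        N = Nbar ∧ ∀ i, d i = d0) := by
  subst hφ
  beta_reduce at hρ₀ hlam₀
  have ha : 0 < α * δ := by positivity
  have hb : 0 < β * δ ^ 2 := by positivity
  have hφmin : 0 < α * δ * dmin + β * δ ^ 2 * dmin ^ 2 := by positivity
  have hdmax : 0 < dmax := hmin.trans hminmax
  have hφmax : 0 < α * δ * dmax + β * δ ^ 2 * dmax ^ 2 := by positivity
  have hfloor : ∀ n : ℕ, n ≤ Nbar ↔ n * (α * δ * dmin + β * δ ^ 2 * dmin ^ 2) ≤ γ := fun n => by
    rw [hNbar, Nat.le_floor_iff (by rw [hρ₀]; positivity), hρ₀, le_div_iff₀ hφmin]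
  have hN : 0 < Nbar := by omega
  obtain ⟨hd0pos, hkey⟩ := quadratic_root_pos_and_eq hβ hδ hγ (Nat.cast_pos.mpr hN) hd0
  have hlam : γ ≤ Nbar * (α * δ * dmax + β * δ ^ 2 * dmax ^ 2) := by
    have : lam₀ < Nbar := hNbar ▸ (Nat.floor_lt (by rw [hlam₀]; positivity)).mp hfl
    rw [← div_le_iff₀ hφmax]
    exact (le_max_right _ _).trans (hlam₀ ▸ this.le)
  obtain ⟨hd0min, hd0max⟩ := mem_Icc_of_mul_eq (strictMonoOn_mul_add_mul_sq ha.le hb)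
    (Nat.cast_pos.mpr hN) hmin.le hdmax.le hd0pos.le ((hfloor Nbar).mp le_rfl) hlam hkey
  simp only [sum_const, card_univ, Fintype.card_fin, nsmul_eq_mul]
  refine ⟨⟨by linarith, hd0min, hd0max⟩, fun N d ⟨hcon, hbd⟩ => ?_⟩
  have hNN : Fintype.card (Fin N) ≤ Nbar := (hfloor _).mpr
    (card_mul_le_of_sum_add_sum_sq_le ha.le hb.le hmin.le (fun i => (hbd i).1) hcon)
  have hω' : βT * (α * δ) < αT * (β * δ ^ 2) := by
    rw [gt_iff_lt, div_lt_div_iff₀ (by positivity) hβT] at hω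
    nlinarith
  obtain ⟨hle, heq⟩ := objective_le_of_constraint (t₂ := Nbar * d0 ^ 2) hb hβT.le hω' hcon
    (by linear_combination hkey) (sum_le_of_sum_add_sum_sq_le ha.le hb hNN hd0pos.le hcon hkey)
  refine ⟨hle, fun h => ?_⟩
  simpa using card_eq_and_eq_of_sum_eq hb hN hd0pos.ne' hNN hcon hkey (heq h)

theorem stmt9 (αT βT α β δ γ dmin dmax : ℝ)
    (hαT : 0 < αT) (hβT : 0 < βT) (hα : 0 < α) (hβ : 0 < β)
    (hδ : 0 < δ) (hδ1 : δ ≤ 1) (hγ : 0 < γ)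
    (hmin : 0 < dmin) (hminmax : dmin < dmax)
    (φ : ℝ → ℝ) (hφ : φ = fun r => α * δ * r + β * δ^2 * r^2)
    (ρ₀ lam₀ : ℝ) (hρ₀ : ρ₀ = γ / φ dmin) (hlam₀ : lam₀ = max 1 (γ / φ dmax))
    (hρ₀2 : 2 ≤ ρ₀) (hfl : ⌊lam₀⌋₊ < ⌊ρ₀⌋₊)
    (hω : αT / βT > α / (β * δ))
    (Nbar : ℕ) (hNbar : Nbar = ⌊ρ₀⌋₊)
    (d0 : ℝ)
    (hd0 : d0 = (-α * Nbar + Real.sqrt ((α * Nbar)^2 + 4 * β * Nbar * γ)) / (2 * β * δ * Nbar)) :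
    (α * δ * (∑ _i : Fin Nbar, d0) + β * δ^2 * (∑ _i : Fin Nbar, d0^2) ≤ γ ∧
      dmin ≤ d0 ∧ d0 ≤ dmax) ∧
    ∀ (N : ℕ) (d : Fin N → ℝ),
      (α * δ * (∑ i, d i) + β * δ^2 * (∑ i, (d i)^2) ≤ γ ∧
        ∀ i, dmin ≤ d i ∧ d i ≤ dmax) →
      (αT * (∑ i, d i) + βT * (∑ i, (d i)^2)
          ≤ αT * (∑ _i : Fin Nbar, d0) + βT * (∑ _i : Fin Nbar, d0^2)) ∧
      (αT * (∑ i, d i) + βT * (∑ i, (d i)^2)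
          = αT * (∑ _i : Fin Nbar, d0) + βT * (∑ _i : Fin Nbar, d0^2) →
        N = Nbar ∧ ∀ i, d i = d0) :=
  stmt9_general αT βT α β δ γ dmin dmax hβT hα hβ hδ hγ hmin hminmax φ hφ ρ₀ lam₀ hρ₀ hlam₀ hfl hω
    Nbar hNbar d0 hd0
end

section
/- On the set {d ∈ ℝ^N : α_0δΣd_i + β_0δ²Σd_i² = γ}, the tumor effect E_T(d) = α_T Σd_i + β_T Σd_i² equals (α_T - β_Tα_0/(β_0δ))·Σd_i + β_Tγ/(β_0δ²); hence maximizing E_T on this set is equivalent to maximizing Σd_i when α_T/β_T > α_0/(β_0δ), and to minimizing Σd_i when α_T/β_T < α_0/(β_0δ). -/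
theorem stmt11 (N : ℕ) (αT βT α₀ β₀ δ γ : ℝ)
    (hαT : 0 < αT) (hβT : 0 < βT) (hα₀ : 0 < α₀) (hβ₀ : 0 < β₀)
    (hδ : 0 < δ) (hδ1 : δ ≤ 1) (hγ : 0 < γ) :
    (∀ d : Fin N → ℝ,
      α₀ * δ * (∑ i, d i) + β₀ * δ^2 * (∑ i, (d i)^2) = γ →
      αT * (∑ i, d i) + βT * (∑ i, (d i)^2)
        = (αT - βT * α₀ / (β₀ * δ)) * (∑ i, d i) + βT * γ / (β₀ * δ^2)) ∧
    (αT / βT > α₀ / (β₀ * δ) →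
      ∀ d d' : Fin N → ℝ,
        α₀ * δ * (∑ i, d i) + β₀ * δ^2 * (∑ i, (d i)^2) = γ →
        α₀ * δ * (∑ i, d' i) + β₀ * δ^2 * (∑ i, (d' i)^2) = γ →
        (αT * (∑ i, d i) + βT * (∑ i, (d i)^2)
            ≤ αT * (∑ i, d' i) + βT * (∑ i, (d' i)^2)
          ↔ (∑ i, d i) ≤ ∑ i, d' i)) ∧
    (αT / βT < α₀ / (β₀ * δ) →
      ∀ d d' : Fin N → ℝ,
        α₀ * δ * (∑ i, d i) + β₀ * δ^2 * (∑ i, (d i)^2) = γ →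
        α₀ * δ * (∑ i, d' i) + β₀ * δ^2 * (∑ i, (d' i)^2) = γ →
        (αT * (∑ i, d i) + βT * (∑ i, (d i)^2)
            ≤ αT * (∑ i, d' i) + βT * (∑ i, (d' i)^2)
          ↔ (∑ i, d' i) ≤ ∑ i, d i)) := by
  have hβδ : (0:ℝ) < β₀ * δ := by positivity
  have key : ∀ S Q : ℝ, α₀ * δ * S + β₀ * δ^2 * Q = γ →
      αT * S + βT * Q = (αT - βT * α₀ / (β₀ * δ)) * S + βT * γ / (β₀ * δ^2) := by
    intro S Q h
    have hQ : Q = (γ - α₀ * δ * S) / (β₀ * δ^2) := by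
      field_simp
      linarith
    rw [hQ]
    field_simp
    ring
  refine ⟨fun d h => key _ _ h, ?_, ?_⟩
  · intro hgt d d' h1 h2
    rw [key _ _ h1, key _ _ h2]
    have h' : α₀ * βT < αT * (β₀ * δ) := (div_lt_div_iff₀ hβδ hβT).mp hgt
    have hc : 0 < αT - βT * α₀ / (β₀ * δ) := by
      rw [sub_pos, div_lt_iff₀ hβδ]
      nlinarith
    constructor <;> intro h <;> nlinarith
  · intro hlt d d' h1 h2
    rw [key _ _ h1, key _ _ h2]
    have h' : αT * (β₀ * δ) < α₀ * βT := (div_lt_div_iff₀ hβT hβδ).mp hlt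
    have hc : αT - βT * α₀ / (β₀ * δ) < 0 := by
      rw [sub_neg, lt_div_iff₀ hβδ]
      nlinarith
    constructor <;> intro h <;> nlinarith
end

section
/- Consider the problem: maximize Σ(d_i + d_i²) over N ∈ ℕ and d ∈ [0,1]^N subject to Σd_i + 2Σd_i² ≤ 10. The supremum of the objective equals 10 and is not attained by any feasible pair (N, d). -/
theorem stmt12 :
    IsLUB {x : ℝ | ∃ (N : ℕ) (d : Fin N → ℝ),
        (∀ i, 0 ≤ d i ∧ d i ≤ 1) ∧
        (∑ i, d i) + 2 * (∑ i, (d i)^2) ≤ 10 ∧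
        x = ∑ i, (d i + (d i)^2)} 10 ∧
    (10 : ℝ) ∉ {x : ℝ | ∃ (N : ℕ) (d : Fin N → ℝ),
        (∀ i, 0 ≤ d i ∧ d i ≤ 1) ∧
        (∑ i, d i) + 2 * (∑ i, (d i)^2) ≤ 10 ∧
        x = ∑ i, (d i + (d i)^2)} := by
  constructor
  · constructor
    · rintro x ⟨N, d, hd, hc, rfl⟩
      have hs : (0:ℝ) ≤ ∑ i, (d i)^2 :=
        Finset.sum_nonneg fun i _ => sq_nonneg _
      rw [Finset.sum_add_distrib]
      linarith
    · intro y hy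
      by_contra h
      push_neg at h
      have h0 : (0:ℝ) ≤ y := by
        apply hy
        exact ⟨0, Fin.elim0, fun i => i.elim0, by simp, by simp⟩
      have hεpos : 0 < 10 - y := by linarith
      obtain ⟨N, hN⟩ := exists_nat_gt (400/(10 - y) + 10)
      have hN10 : (10:ℝ) < N := by
        have : (0:ℝ) ≤ 400/(10-y) := by positivity
        linarith
      have hNpos : (0:ℝ) < N := by linarith
      set s : ℝ := (10 + y)/2 with hsdef
      have hs5 : (5:ℝ) ≤ s := by rw [hsdef]; linarith
      have hs10 : s < 10 := by rw [hsdef]; linarith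
      have e1 : ∑ _i : Fin N, s/(N:ℝ) = s := by
        rw [Finset.sum_const, Finset.card_fin, nsmul_eq_mul]
        field_simp
      have e2 : ∑ _i : Fin N, (s/(N:ℝ))^2 = s^2/N := by
        rw [Finset.sum_const, Finset.card_fin, nsmul_eq_mul, div_pow]
        field_simp
      have h400 : 400 < (10 - y) * N := by
        have := (div_lt_iff₀ hεpos).mp (by linarith : 400/(10-y) < (N:ℝ))
        linarith
      have hkey : s^2/N ≤ (10 - y)/4 := by
        rw [div_le_iff₀ hNpos]
        nlinarith
      have hmem : s + s^2/N ∈ {x : ℝ | ∃ (N : ℕ) (d : Fin N → ℝ),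
          (∀ i, 0 ≤ d i ∧ d i ≤ 1) ∧
          (∑ i, d i) + 2 * (∑ i, (d i)^2) ≤ 10 ∧
          x = ∑ i, (d i + (d i)^2)} := by
        refine ⟨N, fun _ => s/(N:ℝ), fun i => ⟨by positivity, ?_⟩, ?_, ?_⟩
        · rw [div_le_one hNpos]; linarith
        · rw [e1, e2]; linarith
        · rw [Finset.sum_add_distrib, e1, e2]
      have := hy hmem
      have hsq : 0 ≤ s^2/N := by positivity
      have : s ≤ y := by linarith
      linarith [hsdef ▸ this]
  · rintro ⟨N, d, hd, hc, heq⟩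
    rw [Finset.sum_add_distrib] at heq
    have hB : (0:ℝ) ≤ ∑ i, (d i)^2 :=
      Finset.sum_nonneg fun i _ => sq_nonneg _
    have hB0 : ∑ i, (d i)^2 = 0 := by linarith
    have hzero : ∀ i ∈ Finset.univ, (d i)^2 = 0 :=
      (Finset.sum_eq_zero_iff_of_nonneg fun i _ => sq_nonneg _).mp hB0
    have hA : ∑ i, d i = 0 := by
      apply Finset.sum_eq_zero
      intro i hi
      have := hzero i hi
      exact pow_eq_zero_iff (n := 2) (by norm_num) |>.mp this
    linarith
end

section
/- Consider the problem: minimize Σ(d_i + d_i²) over N ∈ ℕ and d ∈ [0,1]^N subject to 2Σd_i + Σd_i² ≥ 10. The infimum of the objective equals 5 and is not attained. -/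
theorem stmt13 :
    IsGLB {x : ℝ | ∃ (N : ℕ) (d : Fin N → ℝ),
        (∀ i, 0 ≤ d i ∧ d i ≤ 1) ∧
        2 * (∑ i, d i) + (∑ i, (d i)^2) ≥ 10 ∧
        x = ∑ i, (d i + (d i)^2)} 5 ∧
    (5 : ℝ) ∉ {x : ℝ | ∃ (N : ℕ) (d : Fin N → ℝ),
        (∀ i, 0 ≤ d i ∧ d i ≤ 1) ∧
        2 * (∑ i, d i) + (∑ i, (d i)^2) ≥ 10 ∧
        x = ∑ i, (d i + (d i)^2)} := by
  have hsplit : ∀ (N : ℕ) (d : Fin N → ℝ),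
      ∑ i, (d i + (d i)^2) = (∑ i, d i) + ∑ i, (d i)^2 := by
    intro N d; exact Finset.sum_add_distrib
  refine ⟨⟨?_, ?_⟩, ?_⟩
  · -- 5 is a lower bound
    rintro x ⟨N, d, hbd, hcon, rfl⟩
    have hQ : (0:ℝ) ≤ ∑ i, (d i)^2 :=
      Finset.sum_nonneg fun i _ => sq_nonneg _
    rw [hsplit]
    linarith
  · -- every lower bound is ≤ 5
    intro b hb
    by_contra hcb
    push_neg at hcb
    have hε : 0 < b - 5 := by linarith
    set ε : ℝ := b - 5 with hεdef
    obtain ⟨N, hN4, hNε⟩ : ∃ N : ℕ, 4 ≤ N ∧ 13 / ε ≤ (N : ℝ) := by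
      obtain ⟨M, hM⟩ := exists_nat_ge (13 / ε)
      exact ⟨max 4 M, le_max_left _ _,
        le_trans hM (by exact_mod_cast le_max_right 4 M)⟩
    have hN4' : (4:ℝ) ≤ (N:ℝ) := by exact_mod_cast hN4
    have hNpos : (0:ℝ) < N := by linarith
    set s : ℝ := Real.sqrt (1 + 10 / N) with hsdef
    have harg : (0:ℝ) ≤ 1 + 10 / N := by positivity
    have hs2 : s ^ 2 = 1 + 10 / N := Real.sq_sqrt harg
    have hsnn : 0 ≤ s := Real.sqrt_nonneg _
    have h10N : 10 / (N:ℝ) ≤ 10 / 4 :=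
      div_le_div_of_nonneg_left (by norm_num) (by norm_num) hN4'
    have hs1 : 1 ≤ s := by
      have h0 : (0:ℝ) < 10 / N := by positivity
      nlinarith [hs2, hsnn]
    have hsle2 : s ≤ 2 := by nlinarith
    have h5N : (0:ℝ) ≤ 5 / N := by positivity
    have hsub : s ≤ 1 + 5 / N := by
      rw [hsdef]
      calc Real.sqrt (1 + 10 / N) ≤ Real.sqrt ((1 + 5 / N)^2) :=
            Real.sqrt_le_sqrt (by
              have h1 : 10 / (N:ℝ) = 2 * (5 / N) := by ring
              nlinarith [sq_nonneg (5 / (N:ℝ))])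
        _ = 1 + 5 / N := Real.sqrt_sq (by positivity)
    set d0 : ℝ := s - 1 with hd0def
    have hd0nn : 0 ≤ d0 := by rw [hd0def]; linarith
    have hd0le : d0 ≤ 1 := by rw [hd0def]; linarith
    have hεN : 13 ≤ ε * N := by
      rw [div_le_iff₀ hε] at hNε; linarith
    have hNs2 : (N:ℝ) * s ^ 2 = (N:ℝ) + 10 := by
      rw [hs2]; field_simp
    have hconv : 2 * ((N:ℝ) * d0) + (N:ℝ) * d0 ^ 2 = 10 := by
      rw [hd0def]; linear_combination hNs2
    have hval : (N:ℝ) * d0 + (N:ℝ) * d0 ^ 2 = 10 - (N:ℝ) * d0 := by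
      linear_combination hconv
    have hsumc : ∀ c : ℝ, (∑ _i : Fin N, c) = (N:ℝ) * c := by
      intro c
      simp [Finset.sum_const, Finset.card_univ]
    have hmem : (10 - (N:ℝ) * d0) ∈ {x : ℝ | ∃ (N : ℕ) (d : Fin N → ℝ),
        (∀ i, 0 ≤ d i ∧ d i ≤ 1) ∧
        2 * (∑ i, d i) + (∑ i, (d i)^2) ≥ 10 ∧
        x = ∑ i, (d i + (d i)^2)} := by
      refine ⟨N, fun _ => d0, fun i => ⟨hd0nn, hd0le⟩, ?_, ?_⟩
      · have e1 : (∑ _i : Fin N, d0) = (N:ℝ) * d0 := hsumc d0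
        have e2 : (∑ _i : Fin N, d0 ^ 2) = (N:ℝ) * d0 ^ 2 := hsumc (d0 ^ 2)
        rw [e1, e2, hconv]
      · have e3 : (∑ _i : Fin N, (d0 + d0 ^ 2)) = (N:ℝ) * (d0 + d0 ^ 2) :=
          hsumc (d0 + d0 ^ 2)
        rw [e3]; linear_combination -hval
    have hble := hb hmem
    -- derive contradiction: N * d0 > 5 - ε
    have hd0nn' : 0 ≤ (N:ℝ) * d0 := mul_nonneg (le_of_lt hNpos) hd0nn
    have hprod : ((N:ℝ) * d0) * (s + 1) = 10 := by
      rw [hd0def]; linear_combination hNs2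
    have hNs : (N:ℝ) * (s + 1) ≤ 2 * N + 5 := by
      have h5 : (N:ℝ) * (5 / N) = 5 := by field_simp
      nlinarith [mul_le_mul_of_nonneg_left hsub (le_of_lt hNpos)]
    have key : 10 * (N:ℝ) ≤ ((N:ℝ) * d0) * (2 * N + 5) := by
      calc 10 * (N:ℝ) = ((N:ℝ) * d0 * (s + 1)) * N := by rw [hprod]
        _ = ((N:ℝ) * d0) * ((N:ℝ) * (s + 1)) := by ring
        _ ≤ ((N:ℝ) * d0) * (2 * N + 5) :=
            mul_le_mul_of_nonneg_left hNs hd0nn'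
    have hNd0 : 5 - ε < (N:ℝ) * d0 := by
      by_contra hle
      push_neg at hle
      have h2N5 : (0:ℝ) ≤ 2 * N + 5 := by linarith
      nlinarith [mul_le_mul_of_nonneg_right hle h2N5]
    linarith
  · -- not attained
    rintro ⟨N, d, hbd, hcon, heq⟩
    rw [hsplit] at heq
    have hQ : (0:ℝ) ≤ ∑ i, (d i)^2 :=
      Finset.sum_nonneg fun i _ => sq_nonneg _
    have hQ0 : ∑ i, (d i)^2 = 0 := le_antisymm (by linarith) hQ
    have hzero : ∀ i ∈ Finset.univ, (d i)^2 = 0 :=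
      (Finset.sum_eq_zero_iff_of_nonneg fun i _ => sq_nonneg _).mp hQ0
    have hS0 : ∑ i, d i = 0 := Finset.sum_eq_zero fun i hi => by
      have := hzero i hi
      exact pow_eq_zero_iff (by norm_num) |>.mp this
    linarith
end

section
/- For the 2D problem: minimize d_1 + d_2 subject to 2(d_1+d_2) + d_1² + d_2² = 12 and 1 ≤ d_1, d_2 ≤ 3, the solutions are exactly (1, √10 - 1) and (√10 - 1, 1). -/
/-!
After the shift `x = d₁ + 1`, `y = d₂ + 1` the constraint becomes `x² + y² = 2² + (√10)²` with
`2 ≤ x, y`, so the feasible set is an arc of a circle and the cost is `x + y - 2`. On such an arc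
`(x² - 4)(y² - 4) ≥ 0` gives `xy ≥ 2√10`, hence `(x + y)² ≥ (2 + √10)²`; equality forces one
factor to vanish, i.e. the minimum is attained exactly at the two endpoints of the arc.
-/

section CircleArc

variable {a b x y : ℝ}

lemma mul_le_mul_of_sq_add_sq_eq (ha : 0 ≤ a) (hb : 0 ≤ b) (hx : a ≤ x) (hy : a ≤ y)
    (h : x ^ 2 + y ^ 2 = a ^ 2 + b ^ 2) : a * b ≤ x * y := by
  have hprod : 0 ≤ (x ^ 2 - a ^ 2) * (y ^ 2 - a ^ 2) :=
    mul_nonneg (by nlinarith) (by nlinarith)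
  have hsq : (a * b) ^ 2 ≤ (x * y) ^ 2 := by linear_combination hprod - a ^ 2 * h
  exact (pow_le_pow_iff_left₀ (by positivity) (by nlinarith) two_ne_zero).mp hsq

lemma add_le_add_of_sq_add_sq_eq (ha : 0 ≤ a) (hb : 0 ≤ b) (hx : a ≤ x) (hy : a ≤ y)
    (h : x ^ 2 + y ^ 2 = a ^ 2 + b ^ 2) : a + b ≤ x + y := by
  have hxy := mul_le_mul_of_sq_add_sq_eq ha hb hx hy h
  have hsq : (a + b) ^ 2 ≤ (x + y) ^ 2 := by linear_combination 2 * hxy - h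
  exact (pow_le_pow_iff_left₀ (by positivity) (by linarith) two_ne_zero).mp hsq

lemma eq_of_add_eq_of_sq_add_sq_eq (ha : 0 ≤ a) (hx : a ≤ x) (hy : a ≤ y)
    (h : x ^ 2 + y ^ 2 = a ^ 2 + b ^ 2) (hsum : x + y = a + b) :
    (x = a ∧ y = b) ∨ (x = b ∧ y = a) := by
  have hxy : x * y = a * b := by nlinarith
  have hprod : (x ^ 2 - a ^ 2) * (y ^ 2 - a ^ 2) = 0 := by
    linear_combination (x * y + a * b) * hxy - a ^ 2 * h
  rcases mul_eq_zero.mp hprod with hxa | hya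
  · have hxa : x = a := by nlinarith
    exact .inl ⟨hxa, by linarith⟩
  · have hya : y = a := by nlinarith
    exact .inr ⟨by linarith, hya⟩

end CircleArc

def DoseFeasible (d₁ d₂ : ℝ) : Prop :=
  2 * (d₁ + d₂) + d₁ ^ 2 + d₂ ^ 2 = 12 ∧ 1 ≤ d₁ ∧ d₁ ≤ 3 ∧ 1 ≤ d₂ ∧ d₂ ≤ 3

lemma DoseFeasible.symm {d₁ d₂ : ℝ} (h : DoseFeasible d₁ d₂) : DoseFeasible d₂ d₁ := by
  obtain ⟨hc, h₁, h₁', h₂, h₂'⟩ := h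
  exact ⟨by linear_combination hc, h₂, h₂', h₁, h₁'⟩

lemma DoseFeasible.shifted_sq_add_sq {d₁ d₂ : ℝ} (h : DoseFeasible d₁ d₂) :
    (d₁ + 1) ^ 2 + (d₂ + 1) ^ 2 = 2 ^ 2 + √10 ^ 2 := by
  rw [Real.sq_sqrt (by norm_num)]
  linear_combination h.1

lemma doseFeasible_one_sqrt_ten_sub_one : DoseFeasible 1 (√10 - 1) := by
  have h10 : √10 ^ 2 = 10 := Real.sq_sqrt (by norm_num)
  have h3 : 3 ≤ √10 := Real.le_sqrt_of_sq_le (by norm_num)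
  have h4 : √10 ≤ 4 := Real.sqrt_le_iff.mpr ⟨by norm_num, by norm_num⟩
  exact ⟨by linear_combination h10, le_rfl, by norm_num, by linarith, by linarith⟩

lemma DoseFeasible.sqrt_ten_le_add {d₁ d₂ : ℝ} (h : DoseFeasible d₁ d₂) : √10 ≤ d₁ + d₂ := by
  have := add_le_add_of_sq_add_sq_eq zero_le_two (Real.sqrt_nonneg 10)
    (by linarith [h.2.1]) (by linarith [h.2.2.2.1]) h.shifted_sq_add_sq
  linarith

lemma DoseFeasible.eq_of_add_eq_sqrt_ten {d₁ d₂ : ℝ} (h : DoseFeasible d₁ d₂)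
    (hsum : d₁ + d₂ = √10) : (d₁ = 1 ∧ d₂ = √10 - 1) ∨ (d₁ = √10 - 1 ∧ d₂ = 1) := by
  rcases eq_of_add_eq_of_sq_add_sq_eq zero_le_two (by linarith [h.2.1]) (by linarith [h.2.2.2.1])
    h.shifted_sq_add_sq (by linarith) with ⟨h₁, h₂⟩ | ⟨h₁, h₂⟩
  · exact .inl ⟨by linarith, by linarith⟩
  · exact .inr ⟨by linarith, by linarith⟩

theorem stmt15 :
    ∀ d₁ d₂ : ℝ,
      ((2 * (d₁ + d₂) + d₁^2 + d₂^2 = 12 ∧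
          1 ≤ d₁ ∧ d₁ ≤ 3 ∧ 1 ≤ d₂ ∧ d₂ ≤ 3) ∧
        ∀ e₁ e₂ : ℝ,
          (2 * (e₁ + e₂) + e₁^2 + e₂^2 = 12 ∧
            1 ≤ e₁ ∧ e₁ ≤ 3 ∧ 1 ≤ e₂ ∧ e₂ ≤ 3) →
          d₁ + d₂ ≤ e₁ + e₂)
      ↔ ((d₁, d₂) = (1, Real.sqrt 10 - 1) ∨ (d₁, d₂) = (Real.sqrt 10 - 1, 1)) := by
  intro d₁ d₂
  show (DoseFeasible d₁ d₂ ∧ ∀ e₁ e₂, DoseFeasible e₁ e₂ → d₁ + d₂ ≤ e₁ + e₂) ↔ _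
  simp only [Prod.mk.injEq]
  constructor
  · rintro ⟨hd, hmin⟩
    have hle := hmin _ _ doseFeasible_one_sqrt_ten_sub_one
    exact hd.eq_of_add_eq_sqrt_ten (le_antisymm (by linarith) hd.sqrt_ten_le_add)
  · rintro (⟨rfl, rfl⟩ | ⟨rfl, rfl⟩) <;>
      refine ⟨?_, fun e₁ e₂ he => by linarith [he.sqrt_ten_le_add]⟩
    · exact doseFeasible_one_sqrt_ten_sub_one
    · exact doseFeasible_one_sqrt_ten_sub_one.symm
end

section
/- Any solution of the problem 'minimize Σd_i subject to αδΣd_i + βδ²Σd_i² = γ and d_min ≤ d_i ≤ d_max' is also a solution of the problem 'minimize Σd_i subject to αδΣd_i + βδ²Σd_i² ≥ γ and d_min ≤ d_i ≤ d_max'. -/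
theorem stmt16 (N : ℕ) (α β δ γ dmin dmax : ℝ)
    (hα : 0 < α) (hβ : 0 < β) (hδ : 0 < δ) (hγ : 0 < γ)
    (hmin : 0 < dmin) (hminmax : dmin < dmax)
    (dbar : Fin N → ℝ)
    (hfeas : α * δ * (∑ i, dbar i) + β * δ^2 * (∑ i, (dbar i)^2) = γ ∧
      ∀ i, dmin ≤ dbar i ∧ dbar i ≤ dmax)
    (hopt : ∀ d : Fin N → ℝ,
      (α * δ * (∑ i, d i) + β * δ^2 * (∑ i, (d i)^2) = γ ∧
        ∀ i, dmin ≤ d i ∧ d i ≤ dmax) →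
      (∑ i, dbar i) ≤ ∑ i, d i) :
    (α * δ * (∑ i, dbar i) + β * δ^2 * (∑ i, (dbar i)^2) ≥ γ ∧
      ∀ i, dmin ≤ dbar i ∧ dbar i ≤ dmax) ∧
    ∀ d : Fin N → ℝ,
      (α * δ * (∑ i, d i) + β * δ^2 * (∑ i, (d i)^2) ≥ γ ∧
        ∀ i, dmin ≤ d i ∧ d i ≤ dmax) →
      (∑ i, dbar i) ≤ ∑ i, d i := by
  obtain ⟨heq, hbox⟩ := hfeas
  refine ⟨⟨le_of_eq heq.symm, hbox⟩, ?_⟩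
  intro d hd
  obtain ⟨hge, hdbox⟩ := hd
  set g : ℝ → ℝ := fun t =>
    α * δ * (∑ i, ((1 - t) * d i + t * dmin)) +
      β * δ ^ 2 * (∑ i, ((1 - t) * d i + t * dmin) ^ 2) with hg_def
  have hg0 : γ ≤ g 0 := by simpa [hg_def] using hge
  have hg1 : g 1 ≤ γ := by
    have h1 : g 1 = α * δ * (∑ _i : Fin N, dmin) +
        β * δ ^ 2 * (∑ _i : Fin N, dmin ^ 2) := by simp [hg_def]
    rw [h1, ← heq]
    have hs1 : (∑ _i : Fin N, dmin) ≤ ∑ i, dbar i :=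
      Finset.sum_le_sum fun i _ => (hbox i).1
    have hs2 : (∑ _i : Fin N, dmin ^ 2) ≤ ∑ i, (dbar i) ^ 2 :=
      Finset.sum_le_sum fun i _ => by nlinarith [(hbox i).1, hmin]
    gcongr
  have hgc : Continuous g := by
    apply Continuous.add
    · exact continuous_const.mul (continuous_finset_sum _ fun i _ => by fun_prop)
    · exact continuous_const.mul (continuous_finset_sum _ fun i _ => by fun_prop)
  have hiv : γ ∈ g '' Set.Icc (0:ℝ) 1 := by
    apply intermediate_value_Icc' (by norm_num) hgc.continuousOn
    exact ⟨hg1, hg0⟩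
  obtain ⟨t, ht, hgt⟩ := hiv
  obtain ⟨ht0, ht1⟩ := ht
  set e : Fin N → ℝ := fun i => (1 - t) * d i + t * dmin with he_def
  have hebox : ∀ i, dmin ≤ e i ∧ e i ≤ dmax := by
    intro i
    obtain ⟨hdi1, hdi2⟩ := hdbox i
    constructor
    · show dmin ≤ (1 - t) * d i + t * dmin
      nlinarith
    · show (1 - t) * d i + t * dmin ≤ dmax
      nlinarith
  have heeq : α * δ * (∑ i, e i) + β * δ ^ 2 * (∑ i, (e i) ^ 2) = γ := hgt
  have hle : (∑ i, dbar i) ≤ ∑ i, e i := hopt e ⟨heeq, hebox⟩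
  have hed : (∑ i, e i) ≤ ∑ i, d i := by
    apply Finset.sum_le_sum
    intro i _
    have := (hdbox i).1
    simp only [he_def]
    nlinarith
  linarith
end

section
/- Let N_1 < N_2 be positive integers, d_min > 0, d̄_1 = (-α_T N_1 + √((α_T N_1)² + 4β_T N_1 γ))/(2β_T N_1), and suppose γ = N_1(α_T d̄_1 + β_T d̄_1²) = N_2(α_T d_min + β_T d_min²). Then for any α_0, β_0, δ > 0 with α_T/β_T > α_0/(β_0 δ), one has N_2(α_0δ d_min + β_0δ² d_min²) < N_1(α_0δ d̄_1 + β_0δ² d̄_1²). -/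
theorem stmt18 (N₁ N₂ : ℕ) (hN₁ : 0 < N₁) (hlt : N₁ < N₂)
    (αT βT α₀ β₀ δ γ dmin : ℝ)
    (hαT : 0 < αT) (hβT : 0 < βT) (hα₀ : 0 < α₀) (hβ₀ : 0 < β₀)
    (hδ : 0 < δ) (hδ1 : δ ≤ 1) (hγ : 0 < γ) (hmin : 0 < dmin)
    (d1 : ℝ)
    (hd1 : d1 = (-αT * N₁ + Real.sqrt ((αT * N₁)^2 + 4 * βT * N₁ * γ)) / (2 * βT * N₁))
    (hγ1 : γ = N₁ * (αT * d1 + βT * d1^2))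
    (hγ2 : γ = N₂ * (αT * dmin + βT * dmin^2))
    (hω : αT / βT > α₀ / (β₀ * δ)) :
    N₂ * (α₀ * δ * dmin + β₀ * δ^2 * dmin^2)
      < N₁ * (α₀ * δ * d1 + β₀ * δ^2 * d1^2) := by
  have hN₁' : (0:ℝ) < N₁ := by exact_mod_cast hN₁
  have hN₂' : (0:ℝ) < N₂ := by exact_mod_cast hN₁.trans hlt
  have hlt' : (N₁:ℝ) < N₂ := by exact_mod_cast hlt
  -- d1 > 0
  have hsq : αT * N₁ < Real.sqrt ((αT * N₁)^2 + 4 * βT * N₁ * γ) :=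
    (Real.lt_sqrt (by positivity)).mpr
      (by nlinarith [mul_pos (mul_pos hβT hN₁') hγ])
  have hd1pos : 0 < d1 := by
    rw [hd1]
    apply div_pos (by linarith) (by positivity)
  -- main equality
  have E : (N₁:ℝ) * (αT * d1 + βT * d1^2) = N₂ * (αT * dmin + βT * dmin^2) := by
    rw [← hγ1, ← hγ2]
  -- d1 > dmin
  have hdd : dmin < d1 := by
    by_contra h
    push_neg at h
    nlinarith [mul_pos (sub_pos.mpr hlt')
        (show 0 < αT * dmin + βT * dmin^2 by positivity),
      mul_nonneg (mul_nonneg hN₁'.le hβT.le)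
        (mul_nonneg (sub_nonneg.mpr h) (by linarith : (0:ℝ) ≤ dmin + d1)),
      mul_nonneg (mul_nonneg hN₁'.le hαT.le) (sub_nonneg.mpr h)]
  -- N₁ d1 < N₂ dmin
  have S : (N₁:ℝ) * d1 < N₂ * dmin := by
    by_contra h
    push_neg at h
    nlinarith [mul_nonneg (sub_nonneg.mpr h) (show (0:ℝ) ≤ αT + βT * d1 by positivity),
      mul_pos (mul_pos hN₂' hmin) (mul_pos hβT (sub_pos.mpr hdd))]
  -- ω condition
  have hω' : α₀ * βT < αT * (β₀ * δ) := by
    rw [gt_iff_lt, div_lt_div_iff₀ (by positivity) hβT] at hω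
    linarith
  have E2 : β₀ * δ^2 * ((N₁:ℝ) * (αT * d1 + βT * d1^2))
      = β₀ * δ^2 * (N₂ * (αT * dmin + βT * dmin^2)) := by rw [E]
  nlinarith [mul_pos (mul_pos hδ (sub_pos.mpr S)) (sub_pos.mpr hω'), E2, hβT,
    mul_pos hβ₀ (mul_pos hδ hδ)]
end

section
/- Assume 0 < d_min < d_max, φ_T(r) = α_T r + β_T r² with α_T, β_T > 0, and γ > 0 with ρ_T := γ/φ_T(d_min) ∈ ℕ, ρ_T ≥ 2, and λ_T := max{1, γ/φ_T(d_max)} satisfying ⌈λ_T⌉ < ⌊ρ_T⌋. If α_T/β_T > α_0/(β_0δ) (with α_0, β_0, δ > 0), then the unique solution of: minimize E_OAR(N,d) = α_0δΣd_i + β_0δ²Σd_i² over N ∈ ℕ, d ∈ ℝ^N, subject to α_TΣd_i + β_TΣd_i² ≥ γ and d_min ≤ d_i ≤ d_max, is N̄ = ρ_T with d̄ = (d_min,...,d_min). -/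
theorem stmt19 (αT βT α₀ β₀ δ γ dmin dmax : ℝ)
    (hαT : 0 < αT) (hβT : 0 < βT) (hα₀ : 0 < α₀) (hβ₀ : 0 < β₀)
    (hδ : 0 < δ) (hγ : 0 < γ)
    (hmin : 0 < dmin) (hminmax : dmin < dmax)
    (φT : ℝ → ℝ) (hφT : φT = fun r => αT * r + βT * r^2)
    (ρT lamT : ℝ) (hρT : ρT = γ / φT dmin) (hlamT : lamT = max 1 (γ / φT dmax))
    (Nbar : ℕ) (hNbar : (Nbar : ℝ) = ρT) (hNbar2 : 2 ≤ Nbar)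
    (hfl : ⌈lamT⌉₊ < ⌊ρT⌋₊)
    (hω : αT / βT > α₀ / (β₀ * δ)) :
    (αT * (∑ _i : Fin Nbar, dmin) + βT * (∑ _i : Fin Nbar, dmin^2) ≥ γ ∧
      ∀ _i : Fin Nbar, dmin ≤ dmin ∧ dmin ≤ dmax) ∧
    ∀ (N : ℕ) (d : Fin N → ℝ),
      (αT * (∑ i, d i) + βT * (∑ i, (d i)^2) ≥ γ ∧
        ∀ i, dmin ≤ d i ∧ d i ≤ dmax) →
      (α₀ * δ * (∑ _i : Fin Nbar, dmin) + β₀ * δ^2 * (∑ _i : Fin Nbar, dmin^2)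
          ≤ α₀ * δ * (∑ i, d i) + β₀ * δ^2 * (∑ i, (d i)^2)) ∧
      (α₀ * δ * (∑ _i : Fin Nbar, dmin) + β₀ * δ^2 * (∑ _i : Fin Nbar, dmin^2)
          = α₀ * δ * (∑ i, d i) + β₀ * δ^2 * (∑ i, (d i)^2) →
        N = Nbar ∧ ∀ i, d i = dmin) := by
  have hA : (0:ℝ) < αT * dmin + βT * dmin^2 := by positivity
  set A : ℝ := αT * dmin + βT * dmin^2 with hAdef
  set B : ℝ := α₀ * δ * dmin + β₀ * δ^2 * dmin^2 with hBdef
  have hB : (0:ℝ) < B := by positivity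
  have hφmin : φT dmin = A := by rw [hφT]
  have hγA : γ = (Nbar : ℝ) * A := by
    have h : (Nbar : ℝ) = γ / A := by rw [hNbar, hρT, hφmin]
    have h2 := (eq_div_iff hA.ne').mp h
    linarith
  have hω' : (0:ℝ) < αT * β₀ * δ - α₀ * βT := by
    rw [gt_iff_lt, div_lt_div_iff₀ (by positivity) hβT] at hω
    nlinarith
  -- per-dose key inequality
  have hkey : ∀ x : ℝ, dmin ≤ x →
      (α₀ * δ * x + β₀ * δ^2 * x^2) * A - B * (αT * x + βT * x^2)
        = δ * x * dmin * (x - dmin) * (αT * β₀ * δ - α₀ * βT) := by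
    intro x _
    rw [hAdef, hBdef]; ring
  have hkeyle : ∀ x : ℝ, dmin ≤ x →
      B * (αT * x + βT * x^2) ≤ (α₀ * δ * x + β₀ * δ^2 * x^2) * A := by
    intro x hx
    have h1 := hkey x hx
    have hx0 : (0:ℝ) < x := lt_of_lt_of_le hmin hx
    nlinarith [mul_nonneg (mul_nonneg (mul_nonneg (mul_nonneg hδ.le hx0.le) hmin.le)
      (sub_nonneg.mpr hx)) hω'.le]
  have hsum_const : (∑ _i : Fin Nbar, dmin) = (Nbar : ℝ) * dmin := by
    simp [Finset.sum_const, mul_comm]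
  have hsum_const2 : (∑ _i : Fin Nbar, dmin^2) = (Nbar : ℝ) * dmin^2 := by
    simp [Finset.sum_const, mul_comm]
  have hbarobj : α₀ * δ * (∑ _i : Fin Nbar, dmin) + β₀ * δ^2 * (∑ _i : Fin Nbar, dmin^2)
      = (Nbar : ℝ) * B := by
    rw [hsum_const, hsum_const2, hBdef]; ring
  refine ⟨⟨?_, fun _ => ⟨le_refl _, hminmax.le⟩⟩, ?_⟩
  · rw [hsum_const, hsum_const2]
    have : αT * ((Nbar:ℝ) * dmin) + βT * ((Nbar:ℝ) * dmin^2) = (Nbar:ℝ) * A := by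
      rw [hAdef]; ring
    rw [this]; linarith [hγA]
  · intro N d ⟨hcon, hbnd⟩
    set S₁ := ∑ i, d i with hS₁
    set S₂ := ∑ i, (d i)^2 with hS₂
    have hsplit : ∀ c₁ c₂ : ℝ, (∑ i, (c₁ * d i + c₂ * (d i)^2)) = c₁ * S₁ + c₂ * S₂ := by
      intro c₁ c₂
      rw [Finset.sum_add_distrib, hS₁, hS₂, Finset.mul_sum, Finset.mul_sum]
    have hL : (∑ i, B * (αT * d i + βT * (d i)^2)) = B * (αT * S₁ + βT * S₂) := by
      have : (∑ i, B * (αT * d i + βT * (d i)^2))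
          = ∑ i, ((B * αT) * d i + (B * βT) * (d i)^2) := by
        apply Finset.sum_congr rfl; intro i _; ring
      rw [this, hsplit]; ring
    have hR : (∑ i, (α₀ * δ * d i + β₀ * δ^2 * (d i)^2) * A)
        = (α₀ * δ * S₁ + β₀ * δ^2 * S₂) * A := by
      have : (∑ i, (α₀ * δ * d i + β₀ * δ^2 * (d i)^2) * A)
          = ∑ i, ((α₀ * δ * A) * d i + (β₀ * δ^2 * A) * (d i)^2) := by
        apply Finset.sum_congr rfl; intro i _; ring
      rw [this, hsplit]; ring
    have hterm : ∀ i ∈ Finset.univ, B * (αT * d i + βT * (d i)^2)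
        ≤ (α₀ * δ * d i + β₀ * δ^2 * (d i)^2) * A :=
      fun i _ => hkeyle (d i) (hbnd i).1
    have hsumle : B * (αT * S₁ + βT * S₂) ≤ (α₀ * δ * S₁ + β₀ * δ^2 * S₂) * A := by
      rw [← hL, ← hR]; exact Finset.sum_le_sum hterm
    have hBγ : B * γ ≤ B * (αT * S₁ + βT * S₂) :=
      mul_le_mul_of_nonneg_left hcon hB.le
    have hmain : (Nbar : ℝ) * B ≤ α₀ * δ * S₁ + β₀ * δ^2 * S₂ := by
      have h1 : (Nbar : ℝ) * B * A ≤ (α₀ * δ * S₁ + β₀ * δ^2 * S₂) * A := by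
        calc (Nbar : ℝ) * B * A = B * γ := by rw [hγA]; ring
          _ ≤ B * (αT * S₁ + βT * S₂) := hBγ
          _ ≤ _ := hsumle
      exact le_of_mul_le_mul_right h1 hA
    constructor
    · rw [hbarobj]; exact hmain
    · intro heq
      rw [hbarobj] at heq
      -- equality forces all inequalities tight
      have hEA : (α₀ * δ * S₁ + β₀ * δ^2 * S₂) * A = B * γ := by
        rw [← heq, hγA]; ring
      have hchain1 : B * (αT * S₁ + βT * S₂) = B * γ := le_antisymm (hEA ▸ hsumle) hBγ
      have hconstr_eq : αT * S₁ + βT * S₂ = γ := mul_left_cancel₀ hB.ne' hchain1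
      have hsumeq : (∑ i, B * (αT * d i + βT * (d i)^2))
          = ∑ i, (α₀ * δ * d i + β₀ * δ^2 * (d i)^2) * A := by
        rw [hL, hR, hchain1, hEA]
      have hall : ∀ i ∈ Finset.univ, B * (αT * d i + βT * (d i)^2)
          = (α₀ * δ * d i + β₀ * δ^2 * (d i)^2) * A :=
        (Finset.sum_eq_sum_iff_of_le hterm).mp hsumeq
      have hdi : ∀ i, d i = dmin := by
        intro i
        have hxi : dmin ≤ d i := (hbnd i).1
        have hx0 : (0:ℝ) < d i := lt_of_lt_of_le hmin hxi
        have h1 := hkey (d i) hxi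
        have h2 := hall i (Finset.mem_univ i)
        have h3 : δ * d i * dmin * (d i - dmin) * (αT * β₀ * δ - α₀ * βT) = 0 := by
          rw [← h1, h2]; ring
        have h4 : 0 < δ * d i * dmin * (αT * β₀ * δ - α₀ * βT) :=
          mul_pos (mul_pos (mul_pos hδ hx0) hmin) hω'
        have h5 : (d i - dmin) * (δ * d i * dmin * (αT * β₀ * δ - α₀ * βT)) = 0 := by
          linear_combination h3
        rcases mul_eq_zero.mp h5 with h6 | h6
        · linarith
        · exact absurd h6 (ne_of_gt h4)
      refine ⟨?_, hdi⟩
      have hS₁' : S₁ = (N : ℝ) * dmin := by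
        rw [hS₁]
        rw [Finset.sum_congr rfl (fun i _ => hdi i)]
        simp [Finset.sum_const, mul_comm]
      have hS₂' : S₂ = (N : ℝ) * dmin^2 := by
        rw [hS₂]
        rw [Finset.sum_congr rfl (fun i _ => by rw [hdi i])]
        simp [Finset.sum_const, mul_comm]
      have hNA : (N : ℝ) * A = (Nbar : ℝ) * A := by
        rw [hS₁', hS₂'] at hconstr_eq
        rw [hAdef, ← hγA]
        linear_combination hconstr_eq
      have : (N : ℝ) = (Nbar : ℝ) := mul_right_cancel₀ hA.ne' hNA
      exact_mod_cast this
end
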